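/- Let λ be a partition of n and t a standard λ-tableau with conjugate tableau t′. Then d(t)·d(t′)⁻¹ = w_λ and ℓ(d(t)) + ℓ(d(t′)) = ℓ(w_λ), where w_λ = d(t_λ) and d(s) denotes the unique permutation with t^λ · d(s) = s (resp. t^{λ′} · d(s′) = s′ for tableaux of shape λ′). -/

import Mathlib

attribute [local instance] Classical.propDecidable

noncomputable section

open LaurentPolynomial

/-- The ground ring `S = ℤ[q,q⁻¹]`. -/
abbrev Sring : Type := LaurentPolynomial ℤ

/-- The element `q`. -/
def qq : Sring := T 1

/-- The element `q⁻¹`. -/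
def qinv : Sring := T (-1)

/-- `(-q)^{-k}`. -/
def nqinvpow (k : ℕ) : Sring := (-1 : Sring) ^ k * T (-(k : ℤ))

/-- Generators of the braids-and-ties algebra. -/
inductive BTGen (n : ℕ) : Type
  | g : Fin (n - 1) → BTGen n
  | e : Fin (n - 1) → BTGen n

/-- The free algebra on the generators. -/
abbrev FreeBT (n : ℕ) := FreeAlgebra Sring (BTGen n)

def FG {n : ℕ} (i : Fin (n - 1)) : FreeBT n := FreeAlgebra.ι Sring (BTGen.g i)
def FE {n : ℕ} (i : Fin (n - 1)) : FreeBT n := FreeAlgebra.ι Sring (BTGen.e i)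

/-- The defining relations of the braids-and-ties algebra. -/
inductive BTRel (n : ℕ) : FreeBT n → FreeBT n → Prop
  | gg_far : ∀ i j : Fin (n - 1), ((i : ℕ) + 1 < (j : ℕ) ∨ (j : ℕ) + 1 < (i : ℕ)) →
      BTRel n (FG i * FG j) (FG j * FG i)
  | ge_same : ∀ i : Fin (n - 1), BTRel n (FG i * FE i) (FE i * FG i)
  | braid : ∀ i j : Fin (n - 1), ((i : ℕ) + 1 = (j : ℕ) ∨ (j : ℕ) + 1 = (i : ℕ)) →
      BTRel n (FG i * FG j * FG i) (FG j * FG i * FG j)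
  | egg : ∀ i j : Fin (n - 1), ((i : ℕ) + 1 = (j : ℕ) ∨ (j : ℕ) + 1 = (i : ℕ)) →
      BTRel n (FE i * FG j * FG i) (FG j * FG i * FE j)
  | eeg : ∀ i j : Fin (n - 1), ((i : ℕ) + 1 = (j : ℕ) ∨ (j : ℕ) + 1 = (i : ℕ)) →
      BTRel n (FE i * FE j * FG j) (FE i * FG j * FE i)
  | ege : ∀ i j : Fin (n - 1), ((i : ℕ) + 1 = (j : ℕ) ∨ (j : ℕ) + 1 = (i : ℕ)) →
      BTRel n (FE i * FG j * FE i) (FG j * FE i * FE j)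
  | ee_comm : ∀ i j : Fin (n - 1), BTRel n (FE i * FE j) (FE j * FE i)
  | ge_far : ∀ i j : Fin (n - 1), ((i : ℕ) + 1 < (j : ℕ) ∨ (j : ℕ) + 1 < (i : ℕ)) →
      BTRel n (FG i * FE j) (FE j * FG i)
  | e_idem : ∀ i : Fin (n - 1), BTRel n (FE i * FE i) (FE i)
  | g_quad : ∀ i : Fin (n - 1), BTRel n (FG i * FG i) (1 + (qq - qinv) • (FE i * FG i))

/-- The braids-and-ties algebra `E_n(q)`. -/
abbrev BT (n : ℕ) := RingQuot (BTRel n)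

def btπ (n : ℕ) : FreeBT n →ₐ[Sring] BT n := RingQuot.mkAlgHom Sring (BTRel n)

/-- The generator `g_i`. -/
def bg {n : ℕ} (i : Fin (n - 1)) : BT n := btπ n (FG i)
/-- The generator `e_i`. -/
def be {n : ℕ} (i : Fin (n - 1)) : BT n := btπ n (FE i)
/-- The element `g_i + (q⁻¹ - q) e_i`. -/
def bginv {n : ℕ} (i : Fin (n - 1)) : BT n := bg i + (qinv - qq) • be i

/-! ### Symmetric group combinatorics -/

def loF {n : ℕ} (i : Fin (n - 1)) : Fin n := ⟨i, by have := i.isLt; omega⟩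
def hiF {n : ℕ} (i : Fin (n - 1)) : Fin n := ⟨(i : ℕ) + 1, by have := i.isLt; omega⟩

/-- The simple transposition `s_i = (i, i+1)`. -/
def sT {n : ℕ} (i : Fin (n - 1)) : Equiv.Perm (Fin n) := Equiv.swap (loF i) (hiF i)

/-- The Coxeter length of a permutation, as the number of inversions. -/
def invLen {n : ℕ} (w : Equiv.Perm (Fin n)) : ℕ :=
  ((Finset.univ : Finset (Fin n × Fin n)).filter (fun p => p.1 < p.2 ∧ w p.2 < w p.1)).card

/-- `l` is a reduced word for `w`. -/
def IsRedWord {n : ℕ} (l : List (Fin (n - 1))) (w : Equiv.Perm (Fin n)) : Prop :=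
  w = (l.map sT).prod ∧ l.length = invLen w

/-- `gw` assigns to every permutation the product of the `g_i` along a reduced word;
this characterizes the elements `g_w` of the braids-and-ties algebra. -/
def GwSpec {n : ℕ} (gw : Equiv.Perm (Fin n) → BT n) : Prop :=
  ∀ w l, IsRedWord l w → gw w = (l.map bg).prod

/-! ### The elements `E_{i,j}` and `E_A` -/

def EijAux {n : ℕ} (jm1 : ℕ) : ℕ → BT n
  | 0 => if h : jm1 < n - 1 then be ⟨jm1, h⟩ else 1
  | (k + 1) => if h : jm1 - (k + 1) < n - 1 then
      bg ⟨jm1 - (k + 1), h⟩ * EijAux jm1 k * bginv ⟨jm1 - (k + 1), h⟩ else 1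

/-- `E_{i,j}`, defined by `E_{j-1,j} = e_{j-1}` and `E_{i,j} = g_i E_{i+1,j} g_i⁻¹`. -/
def Eij {n : ℕ} (i j : ℕ) : BT n := EijAux (j - 1) (j - 1 - i)

/-- `E_A` for a set partition `A` of `{1,…,n}` (as a setoid on `Fin n`):
the product of the `E_{i,j}` over pairs `i < j` in a common block of `A`. -/
def EAset {n : ℕ} (A : Setoid (Fin n)) : BT n :=
  ((List.finRange n).map (fun i : Fin n =>
    ((List.finRange n).map (fun j : Fin n =>
      if (i : ℕ) < (j : ℕ) ∧ A.r i j then Eij (i : ℕ) (j : ℕ) else 1)).prod)).prod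

instance setoidFinFintype (n : ℕ) : Fintype (Setoid (Fin n)) := by
  classical
  have : Fintype Prop := Fintype.ofEquiv Bool Equiv.propEquivBool.symm
  exact Fintype.ofInjective (fun A : Setoid (Fin n) => fun x y => A.r x y)
    (fun A B h => by
      have hr : A.r = B.r := by funext x y; exact congrFun (congrFun h x) y
      cases A; cases B; cases hr; rfl)

/-- The right action of a permutation on a set partition. -/
def permSetoid {n : ℕ} (A : Setoid (Fin n)) (w : Equiv.Perm (Fin n)) : Setoid (Fin n) :=
  ⟨fun x y => A.r (w⁻¹ x) (w⁻¹ y),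
    ⟨fun _ => A.iseqv.refl _, fun h => A.iseqv.symm h, fun h1 h2 => A.iseqv.trans h1 h2⟩⟩

/-- `mu` is the Möbius function of the lattice of set partitions (refinement order). -/
def MuSpec {n : ℕ} (mu : Setoid (Fin n) → Setoid (Fin n) → ℤ) : Prop :=
  ∀ A C : Setoid (Fin n), A ≤ C →
    (∑ B ∈ Finset.univ.filter (fun B => A ≤ B ∧ B ≤ C), mu A B) = if A = C then 1 else 0

/-- The Möbius idempotent `𝔼_A = Σ_{B ⊇ A} μ(A,B) E_B`. -/
def bE {n : ℕ} (mu : Setoid (Fin n) → Setoid (Fin n) → ℤ) (A : Setoid (Fin n)) : BT n :=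
  ∑ B ∈ Finset.univ.filter (fun B => A ≤ B), mu A B • EAset B

/-- The type of a set partition: the multiset of its block sizes. -/
def typeOf {n : ℕ} (A : Setoid (Fin n)) : Multiset ℕ :=
  (((Finset.univ : Finset (Fin n)).filter (fun x => ∀ y, A.r x y → x ≤ y)).val).map
    (fun x => (Finset.univ.filter (fun y => A.r x y)).card)

/-- The central idempotent `𝔼_α = Σ_{|A| = α} 𝔼_A`. -/
def Ealpha {n : ℕ} (mu : Setoid (Fin n) → Setoid (Fin n) → ℤ) (α : Nat.Partition n) : BT n :=
  ∑ A ∈ Finset.univ.filter (fun A : Setoid (Fin n) => typeOf A = α.parts), bE mu A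

/-! ### Compositions and Young subgroups -/

/-- Index of the block of the composition `c` containing `x` (0-based). -/
def blockIdx (c : List ℕ) (x : ℕ) : ℕ :=
  (List.range c.length).countP (fun k => decide ((c.take (k + 1)).sum ≤ x))

/-- Membership in the Young subgroup of the composition `c`. -/
def inYoung {n : ℕ} (c : List ℕ) (w : Equiv.Perm (Fin n)) : Prop :=
  ∀ x : Fin n, blockIdx c ((w x : ℕ)) = blockIdx c (x : ℕ)

/-- A multicomposition with `r` components, given as `lam : ℕ → List ℕ`. -/
def compList (r : ℕ) (lam : ℕ → List ℕ) : List ℕ := (List.range r).map (fun i => (lam i).sum)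

def flattenM (r : ℕ) (lam : ℕ → List ℕ) : List ℕ := ((List.range r).map lam).flatten

/-- `lam` is a multicomposition of `n` with `r` components. -/
def MC (n r : ℕ) (lam : ℕ → List ℕ) : Prop :=
  (∀ i, r ≤ i → lam i = []) ∧ (compList r lam).sum = n

/-- A partition, as a weakly decreasing list of positive integers. -/
def IsPart (c : List ℕ) : Prop := c.Pairwise (fun a b => b ≤ a) ∧ ∀ x ∈ c, 0 < x

/-- The multicomposition `lam` is of type `α`. -/
def MCtype (n r : ℕ) (lam : ℕ → List ℕ) (α : Nat.Partition n) : Prop :=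
  (↑(compList r lam) : Multiset ℕ) = α.parts

/-- The set partition `A_λ` attached to a multicomposition: consecutive blocks of sizes
`|λ^{(1)}|, …, |λ^{(r)}|`. -/
def mcSetoid (n r : ℕ) (lam : ℕ → List ℕ) : Setoid (Fin n) :=
  Setoid.ker (fun x : Fin n => blockIdx (compList r lam) (x : ℕ))

/-- Membership in the Young subgroup `S_λ` of a multicomposition. -/
def inYoungM {n : ℕ} (r : ℕ) (lam : ℕ → List ℕ) (w : Equiv.Perm (Fin n)) : Prop :=
  inYoung (flattenM r lam) w

/-- `x_λ = Σ_{w ∈ S_λ} q^{ℓ(w)} g_w`. -/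
def xlam (n r : ℕ) (lam : ℕ → List ℕ) (gw : Equiv.Perm (Fin n) → BT n) : BT n :=
  ∑ w ∈ Finset.univ.filter (fun w : Equiv.Perm (Fin n) => inYoungM r lam w),
    (qq ^ invLen w) • gw w

/-- `y_λ = Σ_{w ∈ S_λ} (-q)^{-ℓ(w)} g_w`. -/
def ylam (n r : ℕ) (lam : ℕ → List ℕ) (gw : Equiv.Perm (Fin n) → BT n) : BT n :=
  ∑ w ∈ Finset.univ.filter (fun w : Equiv.Perm (Fin n) => inYoungM r lam w),
    (nqinvpow (invLen w)) • gw w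

/-! ### Multitableaux -/

/-- A cell `(component, row, column)`. -/
abbrev Cl : Type := ℕ × ℕ × ℕ

/-- Membership of a cell in the Young diagram of `lam`. -/
def InD (lam : ℕ → List ℕ) (c : Cl) : Prop := c.2.2 < (lam c.1).getD c.2.1 0

/-- A bijection of `{1,…,m}` with the diagram of `lam`: a multitableau. -/
def IsTabOn (m : ℕ) (lam : ℕ → List ℕ) (t : Fin m → Cl) : Prop :=
  Function.Injective t ∧ (∀ j, InD lam (t j)) ∧ (∀ c, InD lam c → ∃ j, t j = c)

/-- A row-standard multitableau. -/
def IsRowStd (m : ℕ) (lam : ℕ → List ℕ) (t : Fin m → Cl) : Prop :=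
  IsTabOn m lam t ∧ ∀ j k : Fin m, (t j).1 = (t k).1 → (t j).2.1 = (t k).2.1 →
    (t j).2.2 < (t k).2.2 → j < k

/-- A standard multitableau. -/
def IsStd (m : ℕ) (lam : ℕ → List ℕ) (t : Fin m → Cl) : Prop :=
  IsRowStd m lam t ∧ ∀ j k : Fin m, (t j).1 = (t k).1 → (t j).2.2 = (t k).2.2 →
    (t j).2.1 < (t k).2.1 → j < k

/-- Row-reading order on cells. -/
def rdLt (c d : Cl) : Prop :=
  c.1 < d.1 ∨ (c.1 = d.1 ∧ (c.2.1 < d.2.1 ∨ (c.2.1 = d.2.1 ∧ c.2.2 < d.2.2)))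

/-- Column-reading order on cells. -/
def cdLt (c d : Cl) : Prop :=
  c.1 < d.1 ∨ (c.1 = d.1 ∧ (c.2.2 < d.2.2 ∨ (c.2.2 = d.2.2 ∧ c.2.1 < d.2.1)))

/-- The row-reading multitableau `t^λ`. -/
def IsRowReading (m : ℕ) (lam : ℕ → List ℕ) (t : Fin m → Cl) : Prop :=
  IsTabOn m lam t ∧ ∀ j k : Fin m, j < k → rdLt (t j) (t k)

/-- The column-reading multitableau `t_λ`. -/
def IsColReading (m : ℕ) (lam : ℕ → List ℕ) (t : Fin m → Cl) : Prop :=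
  IsTabOn m lam t ∧ ∀ j k : Fin m, j < k → cdLt (t j) (t k)

/-- Conjugate of a partition (as a list). -/
def conjL (c : List ℕ) : List ℕ :=
  (List.range (c.foldr max 0)).map (fun b => c.countP (fun x => decide (b < x)))

/-- Componentwise conjugate of a multipartition. -/
def conjSh (lam : ℕ → List ℕ) : ℕ → List ℕ := fun i => conjL (lam i)

/-- Conjugate of a multitableau. -/
def conjT {m : ℕ} (t : Fin m → Cl) : Fin m → Cl := fun j => ((t j).1, (t j).2.2, (t j).2.1)

/-- Number of entries `< mm` of `t` lying in component `i`, rows `≤ a`. -/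
def cntT {m : ℕ} (t : Fin m → Cl) (mm i a : ℕ) : ℕ :=
  (Finset.univ.filter (fun j : Fin m => (j : ℕ) < mm ∧ (t j).1 = i ∧ (t j).2.1 ≤ a)).card

/-- Dominance order on multitableaux: `TabDom t s` means `t ⊴ s`. -/
def TabDom {m : ℕ} (t s : Fin m → Cl) : Prop := ∀ mm i a, cntT t mm i a ≤ cntT s mm i a

/-- `D lam t` is the permutation `d(t)` with `t = t^λ · d(t)`. -/
def DSpecF (n : ℕ) (D : (ℕ → List ℕ) → (Fin n → Cl) → Equiv.Perm (Fin n)) : Prop :=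
  ∀ lam t, IsTabOn n lam t → ∀ tl, IsRowReading n lam tl → ∀ j, tl (D lam t j) = t j

/-! ### The poset `L_n(α)` -/

/-- Dominance order on partitions/compositions given as lists. -/
def LDom (c d : List ℕ) : Prop := ∀ k, (c.take k).sum ≤ (d.take k).sum

/-- `lt` is (the strict form of) a total order on partitions extending the dominance order. -/
def LtSpec (lt : List ℕ → List ℕ → Prop) : Prop :=
  Transitive lt ∧ (∀ c, ¬ lt c c) ∧ (∀ c d, c ≠ d → lt c d ∨ lt d c) ∧
  (∀ c d, c ≠ d → c.sum = d.sum → LDom c d → lt c d)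

/-- Validity of the datum `Λ = (λ | μ) ∈ L_n(α)`: `λ` is an increasing `r`-multipartition of `n`
of type `α` and `μ` is an `s'`-multipartition of `r` whose component sizes are the multiplicities
of the distinct components of `λ`. -/
def LnValid (n r : ℕ) (α : Nat.Partition n) (s' : ℕ) (lam msh : ℕ → List ℕ)
    (lt : List ℕ → List ℕ → Prop) : Prop :=
  MC n r lam ∧ (∀ i, IsPart (lam i)) ∧ MCtype n r lam α ∧
  (∀ i j, i < j → j < r → lam i = lam j ∨ lt (lam i) (lam j)) ∧
  MC r s' msh ∧ (∀ j, IsPart (msh j)) ∧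
  ((List.range r).map lam).dedup.length = s' ∧
  (∀ j, j < s' → (msh j).sum =
    ((List.range r).map lam).count (((List.range r).map lam).dedup.getD j []))

/-- A pair `(𝔱 | u)` representing a `Λ`-tableau. -/
abbrev PairT (n r : ℕ) : Type := (Fin n → Cl) × (Fin r → Cl)

/-- `u` is of the initial kind. -/
def InitialKind (r : ℕ) (msh : ℕ → List ℕ) (u : Fin r → Cl) : Prop :=
  ∀ tl, IsRowReading r msh tl → ∀ j, (u j).1 = (tl j).1

/-- The multitableau `t` is increasing. -/
def Increasing (n r : ℕ) (lam : ℕ → List ℕ) (t : Fin n → Cl) : Prop :=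
  ∀ i j : ℕ, i < j → j < r → lam i = lam j →
    (Finset.univ.filter (fun k : Fin n => (t k).1 = i)).min <
    (Finset.univ.filter (fun k : Fin n => (t k).1 = j)).min

/-- Row-standard `Λ`-tableaux. -/
def RowStdPair (n r : ℕ) (lam msh : ℕ → List ℕ) (p : PairT n r) : Prop :=
  IsRowStd n lam p.1 ∧ Increasing n r lam p.1 ∧ IsRowStd r msh p.2 ∧ InitialKind r msh p.2

/-- Standard `Λ`-tableaux. -/
def StdPair (n r : ℕ) (lam msh : ℕ → List ℕ) (p : PairT n r) : Prop :=
  IsStd n lam p.1 ∧ Increasing n r lam p.1 ∧ IsStd r msh p.2 ∧ InitialKind r msh p.2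

/-- Conjugate of a `Λ`-tableau. -/
def conjPair {n r : ℕ} (p : PairT n r) : PairT n r := (conjT p.1, conjT p.2)

/-- Dominance order on `Λ`-tableaux. -/
def PairDom {n r : ℕ} (t s : PairT n r) : Prop :=
  TabDom t.1 s.1 ∧ (t.1 = s.1 → TabDom t.2 s.2)

/-! ### The multiplicity group, `b_μ`, `c_μ` and the (dual) cellular basis -/

/-- Membership in the Young subgroup `S_μ ≤ S_r` of the multipartition `μ` of `r`. -/
def inSmu (r s' : ℕ) (msh : ℕ → List ℕ) (σ : Equiv.Perm (Fin r)) : Prop :=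
  ∀ x : Fin r, blockIdx (flattenM s' msh) ((σ x : ℕ)) = blockIdx (flattenM s' msh) (x : ℕ)

/-- Membership in the multiplicity group `S^m_Λ` (permutations of components fixing `λ`). -/
def inSm (r : ℕ) (lam : ℕ → List ℕ) (σ : Equiv.Perm (Fin r)) : Prop :=
  ∀ i : Fin r, lam ((σ i : ℕ)) = lam (i : ℕ)

/-- The element `b_μ = ι(x_μ(1))`. -/
def bmuE {n r : ℕ} (s' : ℕ) (msh : ℕ → List ℕ) (Bb : Equiv.Perm (Fin r) → BT n) : BT n :=
  ∑ σ ∈ Finset.univ.filter (fun σ : Equiv.Perm (Fin r) => inSmu r s' msh σ), Bb σ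

/-- The element `c_μ = ι(y_μ(1))`. -/
def cmuE {n r : ℕ} (s' : ℕ) (msh : ℕ → List ℕ) (Bb : Equiv.Perm (Fin r) → BT n) : BT n :=
  ∑ σ ∈ Finset.univ.filter (fun σ : Equiv.Perm (Fin r) => inSmu r s' msh σ),
    ((Equiv.Perm.sign σ : ℤ)) • Bb σ

/-- `Bb lam` is the embedding `ι` of the multiplicity group of `λ` into `E_n^α(q)`,
`σ ↦ 𝔹_σ`: multiplicative and injective on `S^m_Λ`. -/
def BbSpec (n r : ℕ) (Bb : (ℕ → List ℕ) → Equiv.Perm (Fin r) → BT n) : Prop :=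
  ∀ lam, (∀ σ τ, inSm r lam σ → inSm r lam τ → Bb lam (σ * τ) = Bb lam σ * Bb lam τ) ∧
    (∀ σ τ, inSm r lam σ → inSm r lam τ → Bb lam σ = Bb lam τ → σ = τ)

/-- `Dr msh u` is the element `d(u)` of the multiplicity group for a `μ`-multitableau `u`. -/
def DrSpecF (r : ℕ) (Dr : (ℕ → List ℕ) → (Fin r → Cl) → Equiv.Perm (Fin r)) : Prop :=
  ∀ msh u, IsTabOn r msh u → ∀ tl, IsRowReading r msh tl → ∀ j, tl (Dr msh u j) = u j

/-- The anti-automorphism `*` of the braids-and-ties algebra. -/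
def StarSpec {n : ℕ} (st : BT n → BT n) : Prop :=
  (∀ x y, st (x + y) = st x + st y) ∧ (∀ (c : Sring) x, st (c • x) = c • st x) ∧
  (∀ x y, st (x * y) = st y * st x) ∧ st 1 = 1 ∧
  (∀ i, st (bg i) = bg i) ∧ (∀ i, st (be i) = be i)

/-- The basis element `x_s = 𝔼_λ x_λ g_{d(s)}` of the permutation module `M(λ)`. -/
def xsE (n r : ℕ) (mu : Setoid (Fin n) → Setoid (Fin n) → ℤ)
    (gw : Equiv.Perm (Fin n) → BT n)
    (D : (ℕ → List ℕ) → (Fin n → Cl) → Equiv.Perm (Fin n))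
    (lam : ℕ → List ℕ) (t : Fin n → Cl) : BT n :=
  bE mu (mcSetoid n r lam) * xlam n r lam gw * gw (D lam t)

/-- The basis element `m_t = 𝔼_λ x_λ b_μ 𝔹_{d(u)} g_{d(𝔱)}` of the permutation module `M(Λ)`. -/
def mBase (n r : ℕ) (mu : Setoid (Fin n) → Setoid (Fin n) → ℤ)
    (gw : Equiv.Perm (Fin n) → BT n)
    (D : (ℕ → List ℕ) → (Fin n → Cl) → Equiv.Perm (Fin n))
    (Dr : (ℕ → List ℕ) → (Fin r → Cl) → Equiv.Perm (Fin r))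
    (Bb : (ℕ → List ℕ) → Equiv.Perm (Fin r) → BT n)
    (s' : ℕ) (lam msh : ℕ → List ℕ) (p : PairT n r) : BT n :=
  bE mu (mcSetoid n r lam) * xlam n r lam gw * bmuE s' msh (Bb lam) *
    Bb lam (Dr msh p.2) * gw (D lam p.1)

/-- The cellular basis element `m_{s t}`. -/
def mstE (n r : ℕ) (mu : Setoid (Fin n) → Setoid (Fin n) → ℤ)
    (gw : Equiv.Perm (Fin n) → BT n) (st : BT n → BT n)
    (D : (ℕ → List ℕ) → (Fin n → Cl) → Equiv.Perm (Fin n))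
    (Dr : (ℕ → List ℕ) → (Fin r → Cl) → Equiv.Perm (Fin r))
    (Bb : (ℕ → List ℕ) → Equiv.Perm (Fin r) → BT n)
    (s' : ℕ) (lam msh : ℕ → List ℕ) (p q : PairT n r) : BT n :=
  bE mu (mcSetoid n r lam) * st (gw (D lam p.1)) * xlam n r lam gw *
    st (Bb lam (Dr msh p.2)) * bmuE s' msh (Bb lam) * Bb lam (Dr msh q.2) * gw (D lam q.1)

/-- The dual cellular basis element `n_{s t}`. -/
def nstE (n r : ℕ) (mu : Setoid (Fin n) → Setoid (Fin n) → ℤ)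
    (gw : Equiv.Perm (Fin n) → BT n) (st : BT n → BT n)
    (D : (ℕ → List ℕ) → (Fin n → Cl) → Equiv.Perm (Fin n))
    (Dr : (ℕ → List ℕ) → (Fin r → Cl) → Equiv.Perm (Fin r))
    (Bb : (ℕ → List ℕ) → Equiv.Perm (Fin r) → BT n)
    (s' : ℕ) (lam msh : ℕ → List ℕ) (p q : PairT n r) : BT n :=
  bE mu (mcSetoid n r lam) * st (gw (D lam p.1)) * ylam n r lam gw *
    st (Bb lam (Dr msh p.2)) * cmuE s' msh (Bb lam) * Bb lam (Dr msh q.2) * gw (D lam q.1)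

/-! ### Tensor space -/

/-- The tensor space `V^{⊗n}` for `dim V = N·r`. -/
abbrev Wmod (n N r : ℕ) : Type := (Fin n → Fin N × Fin r) → Sring

/-- Basis vector `v_{i̲}^{s̲}`. -/
def sing {n N r : ℕ} (b : Fin n → Fin N × Fin r) : Wmod n N r := Pi.single b 1

def ofBasis {n N r : ℕ} (φ : (Fin n → Fin N × Fin r) → Wmod n N r) :
    Module.End Sring (Wmod n N r) :=
  (Pi.basisFun Sring (Fin n → Fin N × Fin r)).constr Sring φ

/-- Action of `e_i` on basis vectors. -/
def eActB {n N r : ℕ} (i : Fin (n - 1)) (b : Fin n → Fin N × Fin r) : Wmod n N r :=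
  if (b (loF i)).2 = (b (hiF i)).2 then
    sing (Function.update (Function.update b (loF i) ((b (hiF i)).1, (b (loF i)).2))
      (hiF i) ((b (loF i)).1, (b (hiF i)).2))
  else 0

/-- Action of `g_i` on basis vectors. -/
def gActB {n N r : ℕ} (i : Fin (n - 1)) (b : Fin n → Fin N × Fin r) : Wmod n N r :=
  if (b (loF i)).2 ≠ (b (hiF i)).2 then sing (fun j => b (sT i j))
  else if (b (loF i)).1 = (b (hiF i)).1 then qq • sing b
  else if (b (loF i)).1 < (b (hiF i)).1 then sing (fun j => b (sT i j))
  else (qq - qinv) • sing b + sing (fun j => b (sT i j))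

/-- The operator `E_i` on `V^{⊗n}`. -/
def Eop {n N r : ℕ} (i : Fin (n - 1)) : Module.End Sring (Wmod n N r) := ofBasis (eActB i)

/-- The operator `G_i` on `V^{⊗n}`. -/
def Gop {n N r : ℕ} (i : Fin (n - 1)) : Module.End Sring (Wmod n N r) := ofBasis (gActB i)

/-- The vector `v_t` attached to a multitableau `t`. -/
def vOf {n : ℕ} (N r : ℕ) (hN : 0 < N) (hr : 0 < r) (t : Fin n → Cl) : Wmod n N r :=
  sing (fun j => (⟨(t j).2.1 % N, Nat.mod_lt _ hN⟩, ⟨(t j).1 % r, Nat.mod_lt _ hr⟩))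

end

/-- The one-component multishape attached to a single partition. -/
def sh1 (c : List ℕ) : ℕ → List ℕ := fun i => if i = 0 then c else []

/-!
Compare three linear orders on the entries of `t`: the natural one, the order in which the
row reading of `λ` visits their cells, and the order of the column reading. The inversions of
`d(t)` and `d(t′)` are the pairs on which the natural order disagrees with the row and with the
column reading respectively, and those of `d(t) d(t′)⁻¹ = w_λ` the pairs on which the two
readings disagree. A pair of entries out of order in both readings would put the larger entry
weakly north-west of the smaller one, which standardness forbids; so the natural order lies
between the two readings, and the lengths add. The product formula holds because `t d(t′)⁻¹`
lists the cells in column-reading order, hence equals `t_λ`.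
-/

theorem invLen_mul_inv_eq_card {n : ℕ} (σ τ : Equiv.Perm (Fin n)) :
    invLen (σ * τ⁻¹) = (Finset.univ.filter fun p : Fin n × Fin n =>
      τ p.1 < τ p.2 ∧ σ p.2 < σ p.1).card := by
  refine Finset.card_equiv ((τ.prodCongr τ).symm) fun p => ?_
  rw [Finset.mem_filter]
  simp only [Finset.mem_filter, Finset.mem_univ, true_and, Equiv.prodCongr_symm,
    Equiv.prodCongr_apply, Prod.map, Equiv.Perm.mul_apply, Equiv.Perm.inv_def,
    Equiv.apply_symm_apply]

theorem invLen_mul_inv_of_disjoint {n : ℕ} (σ τ : Equiv.Perm (Fin n))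
    (h : ∀ j k, j < k → σ k < σ j → τ k < τ j → False) :
    invLen (σ * τ⁻¹) = invLen σ + invLen τ := by
  rw [invLen_mul_inv_eq_card, ← Finset.card_filter_add_card_filter_not (fun p => p.1 < p.2)]
  congr 1
  · refine congrArg Finset.card (Finset.ext fun p => ?_)
    simp only [Finset.mem_filter, Finset.mem_univ, true_and]
    refine ⟨fun ⟨⟨_, hσ⟩, hlt⟩ => ⟨hlt, hσ⟩, fun ⟨hlt, hσ⟩ => ⟨⟨?_, hσ⟩, hlt⟩⟩
    exact lt_of_not_ge fun hle => h _ _ hlt hσ (hle.lt_of_ne (τ.injective.ne hlt.ne'))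
  · refine Finset.card_equiv (Equiv.prodComm _ _) fun p => ?_
    simp only [Finset.mem_filter, Finset.mem_univ, true_and, Equiv.prodComm_apply,
      Prod.fst_swap, Prod.snd_swap, not_lt]
    refine ⟨fun ⟨⟨hτ, _⟩, hle⟩ => ⟨hle.lt_of_ne (ne_of_apply_ne τ hτ.ne'), hτ⟩,
      fun ⟨hlt, hτ⟩ => ⟨⟨hτ, ?_⟩, hlt.le⟩⟩
    exact lt_of_not_ge fun hle => h _ _ hlt (hle.lt_of_ne (σ.injective.ne hlt.ne')) hτ

def rowKey (c : Cl) : ℕ ×ₗ ℕ ×ₗ ℕ := toLex (c.1, toLex (c.2.1, c.2.2))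

def colKey (c : Cl) : ℕ ×ₗ ℕ ×ₗ ℕ := toLex (c.1, toLex (c.2.2, c.2.1))

theorem rdLt_iff_rowKey_lt {c d : Cl} : rdLt c d ↔ rowKey c < rowKey d := by
  simp only [rdLt, rowKey, Prod.Lex.toLex_lt_toLex]

theorem cdLt_iff_colKey_lt {c d : Cl} : cdLt c d ↔ colKey c < colKey d := by
  simp only [cdLt, colKey, Prod.Lex.toLex_lt_toLex]

theorem rowKey_conjT {m : ℕ} (t : Fin m → Cl) (j : Fin m) : rowKey (conjT t j) = colKey (t j) :=
  rfl

theorem colKey_injective : Function.Injective colKey := fun c d h => by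
  simp only [colKey, toLex_inj, Prod.mk.injEq] at h
  exact Prod.ext h.1 (Prod.ext h.2.2 h.2.1)

theorem le_of_rowKey_lt_of_colKey_lt {c d : Cl} (hr : rowKey c < rowKey d)
    (hc : colKey c < colKey d) (h : c.1 = d.1) : c.2.1 ≤ d.2.1 ∧ c.2.2 ≤ d.2.2 := by
  simp only [rowKey, colKey, Prod.Lex.toLex_lt_toLex] at hr hc
  omega

theorem InD_sh1_fst {c : List ℕ} {x : Cl} (h : InD (sh1 c) x) : x.1 = 0 := by
  by_contra hx
  simp [InD, sh1, hx] at h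

section Tableaux

variable {m : ℕ} {lam : ℕ → List ℕ} {t s : Fin m → Cl}

theorem IsTabOn.range_eq (h : IsTabOn m lam t) : Set.range t = {c | InD lam c} :=
  Set.ext fun c => ⟨fun ⟨j, hj⟩ => hj ▸ h.2.1 j, h.2.2 c⟩

theorem IsRowReading.strictMono_rowKey (h : IsRowReading m lam t) : StrictMono (rowKey ∘ t) :=
  fun _ _ hjk => rdLt_iff_rowKey_lt.mp (h.2 _ _ hjk)

theorem IsColReading.strictMono_colKey (h : IsColReading m lam t) : StrictMono (colKey ∘ t) :=
  fun _ _ hjk => cdLt_iff_colKey_lt.mp (h.2 _ _ hjk)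

theorem IsColReading.eq_of_strictMono (h : IsColReading m lam t)
    (hs : Set.range s = {c | InD lam c}) (hsm : StrictMono (colKey ∘ s)) : s = t := by
  refine colKey_injective.comp_left ((hsm.range_inj h.strictMono_colKey).mp ?_)
  rw [Set.range_comp, Set.range_comp, hs, h.1.range_eq]

theorem IsStd.le_of_cell_le (h : IsStd m lam t) {j k : Fin m} (hc : (t j).1 = (t k).1)
    (hr : (t j).2.1 ≤ (t k).2.1) (hcol : (t j).2.2 ≤ (t k).2.2) : j ≤ k := by
  obtain ⟨⟨⟨hinj, hInD, hsurj⟩, hrow⟩, hcolumn⟩ := h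
  obtain ⟨i, hi⟩ := hsurj ((t k).1, (t k).2.1, (t j).2.2) (hcol.trans_lt (hInD k))
  have hji : j ≤ i := by
    rcases hr.lt_or_eq with hr | hr
    · exact (hcolumn j i (by rw [hi, hc]) (by rw [hi]) (by rw [hi]; exact hr)).le
    · exact (hinj (hi.trans (Prod.ext hc.symm (Prod.ext hr.symm rfl))).symm).le
  have hik : i ≤ k := by
    rcases hcol.lt_or_eq with hcol | hcol
    · exact (hrow i k (by rw [hi]) (by rw [hi]) (by rw [hi]; exact hcol)).le
    · exact (hinj (hi.trans (Prod.ext rfl (Prod.ext rfl hcol)))).le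
  exact hji.trans hik

end Tableaux

theorem statement1_general (n : ℕ) (lam : List ℕ)
    (t tlam tcol tlam' : Fin n → Cl)
    (htlam : IsRowReading n (sh1 lam) tlam)
    (htcol : IsColReading n (sh1 lam) tcol)
    (htlam' : IsRowReading n (sh1 (conjL lam)) tlam')
    (hstd : IsStd n (sh1 lam) t)
    (dt dt' wlam : Equiv.Perm (Fin n))
    (hdt : ∀ j, tlam (dt j) = t j)
    (hdt' : ∀ j, tlam' (dt' j) = conjT t j)
    (hwlam : ∀ j, tlam (wlam j) = tcol j) :
    dt * dt'⁻¹ = wlam ∧ invLen dt + invLen dt' = invLen wlam := by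
  have lt_iff_dt : ∀ j k, dt j < dt k ↔ rowKey (t j) < rowKey (t k) := fun j k => by
    rw [← hdt, ← hdt]
    exact htlam.strictMono_rowKey.lt_iff_lt.symm
  have lt_iff_dt' : ∀ j k, dt' j < dt' k ↔ colKey (t j) < colKey (t k) := fun j k => by
    rw [← rowKey_conjT, ← rowKey_conjT, ← hdt', ← hdt']
    exact htlam'.strictMono_rowKey.lt_iff_lt.symm
  have htcol_eq : t ∘ ⇑dt'⁻¹ = tcol := by
    refine htcol.eq_of_strictMono (by rw [EquivLike.range_comp, hstd.1.1.range_eq]) ?_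
    intro a b hab
    exact (lt_iff_dt' _ _).mp (by simpa using hab)
  have hprod : dt * dt'⁻¹ = wlam := Equiv.ext fun j => htlam.1.1 (by
    rw [hwlam, ← htcol_eq, Equiv.Perm.mul_apply, hdt, Function.comp_apply])
  refine ⟨hprod, hprod ▸ (invLen_mul_inv_of_disjoint dt dt' fun j k hjk hinv hinv' => ?_).symm⟩
  have hfst : (t k).1 = (t j).1 := by
    rw [InD_sh1_fst (hstd.1.1.2.1 k), InD_sh1_fst (hstd.1.1.2.1 j)]
  obtain ⟨hr, hc⟩ := le_of_rowKey_lt_of_colKey_lt ((lt_iff_dt k j).mp hinv)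
    ((lt_iff_dt' k j).mp hinv') hfst
  exact (hstd.le_of_cell_le hfst hr hc).not_gt hjk

/-- for a partition `λ ⊢ n` and a standard `λ`-tableau `t` with conjugate `t′`,
`d(t)·d(t′)⁻¹ = w_λ` and `ℓ(d(t)) + ℓ(d(t′)) = ℓ(w_λ)`, where `w_λ = d(t_λ)`. -/
theorem statement1 (n : ℕ) (lam : List ℕ) (hpart : IsPart lam) (hsum : lam.sum = n)
    (t tlam tcol tlam' : Fin n → Cl)
    (htlam : IsRowReading n (sh1 lam) tlam)
    (htcol : IsColReading n (sh1 lam) tcol)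
    (htlam' : IsRowReading n (sh1 (conjL lam)) tlam')
    (hstd : IsStd n (sh1 lam) t)
    (dt dt' wlam : Equiv.Perm (Fin n))
    (hdt : ∀ j, tlam (dt j) = t j)
    (hdt' : ∀ j, tlam' (dt' j) = conjT t j)
    (hwlam : ∀ j, tlam (wlam j) = tcol j) :
    dt * dt'⁻¹ = wlam ∧ invLen dt + invLen dt' = invLen wlam :=
  statement1_general n lam t tlam tcol tlam' htlam htcol htlam' hstd dt dt' wlam hdt hdt' hwlam
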